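/- arXiv:1901.11314 — 3 statements merged into one kernel-verified Lean document; each statement's English description precedes it below -/
import Mathlib

section
/- Let X be a topological space and let F and G be commuting homeomorphisms of X of finite orders n ≥ 1 and m ≥ 1 respectively. Let Ḡ be the homeomorphism of X/⟨F⟩ induced by G. Suppose there exists a point x₀ ∈ X whose stabilizer in the group ⟨F,G⟩ is trivial, i.e., the only element of ⟨F,G⟩ fixing x₀ is the identity. Then the order of Ḡ is strictly less than m if, and only if, F^l = G^k for some integers 0 < k < m and 0 < l < n. -/
/-- The group of self-homeomorphisms of a topological space `X`,
with multiplication given by composition: `(f * g) x = f (g x)`. -/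
instance Homeomorph.instGroupSelfHomeomorph {X : Type*} [TopologicalSpace X] : Group (X ≃ₜ X) where
  mul f g := g.trans f
  one := Homeomorph.refl X
  inv := Homeomorph.symm
  mul_assoc _ _ _ := Homeomorph.ext fun _ => rfl
  one_mul _ := Homeomorph.ext fun _ => rfl
  mul_one _ := Homeomorph.ext fun _ => rfl
  inv_mul_cancel f := Homeomorph.ext fun x => f.symm_apply_apply x

/-- The orbit equivalence relation on `X` determined by a group `Γ` of homeomorphisms of `X`:
two points are equivalent if some element of `Γ` maps one to the other.  The quotient
`Quotient (orbitSetoid Γ)` is the orbit space `X/Γ`, carrying the quotient topology, and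
`Quotient.mk _ : X → Quotient (orbitSetoid Γ)` is the quotient map `π`. -/
def orbitSetoid {X : Type*} [TopologicalSpace X] (Γ : Subgroup (X ≃ₜ X)) : Setoid X where
  r x y := ∃ h ∈ Γ, (h : X ≃ₜ X) x = y
  iseqv := by
    refine ⟨fun x => ⟨1, Γ.one_mem, rfl⟩, ?_, ?_⟩
    · rintro x y ⟨h, hh, rfl⟩
      exact ⟨h⁻¹, Γ.inv_mem hh, h.symm_apply_apply x⟩
    · rintro x y z ⟨h, hh, rfl⟩ ⟨h', hh', rfl⟩
      exact ⟨h' * h, Γ.mul_mem hh' hh, rfl⟩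

/-! Ḡᵏ = 1 exactly when Gᵏ ∈ ⟨F⟩. One direction is immediate; conversely, Ḡᵏ = 1 gives
Gᵏ x₀ = Fʲ x₀ for some `j`, so F⁻ʲ Gᵏ ∈ ⟨F, G⟩ fixes x₀ and is therefore the identity.
Hence |Ḡ| < m iff Gᵏ = Fˡ for some 0 < k < m, where `l` can be reduced mod `n`, and
`l ≠ 0` since Gᵏ ≠ 1. -/

section OrbitSpace

variable {X : Type*} [TopologicalSpace X] {Γ : Subgroup (X ≃ₜ X)} {G : X ≃ₜ X}
  {Gbar : Quotient (orbitSetoid Γ) ≃ₜ Quotient (orbitSetoid Γ)}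

theorem induced_pow_mk (hGbar : ∀ x : X, Gbar (Quotient.mk _ x) = Quotient.mk _ (G x))
    (k : ℕ) (x : X) : (Gbar ^ k) (Quotient.mk _ x) = Quotient.mk _ ((G ^ k) x) := by
  induction k generalizing x with
  | zero => rfl
  | succ k ih => exact (ih (G x)).symm ▸ congrArg (Gbar ^ k) (hGbar x)

theorem induced_pow_eq_one_of_mem
    (hGbar : ∀ x : X, Gbar (Quotient.mk _ x) = Quotient.mk _ (G x))
    {k : ℕ} (hk : G ^ k ∈ Γ) : Gbar ^ k = 1 := by
  ext q
  induction q using Quotient.ind with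
  | _ x =>
    exact (induced_pow_mk hGbar k x).trans
      (Quotient.sound ⟨(G ^ k)⁻¹, Γ.inv_mem hk, (G ^ k).symm_apply_apply x⟩)

theorem mem_of_induced_pow_eq_one
    (hGbar : ∀ x : X, Gbar (Quotient.mk _ x) = Quotient.mk _ (G x))
    {H : Subgroup (X ≃ₜ X)} (hΓH : Γ ≤ H) (hGH : G ∈ H) {x₀ : X}
    (hx₀ : ∀ h ∈ H, (h : X ≃ₜ X) x₀ = x₀ → h = 1) {k : ℕ} (hk : Gbar ^ k = 1) :
    G ^ k ∈ Γ := by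
  obtain ⟨h, hΓ, hx⟩ : (orbitSetoid Γ) ((G ^ k) x₀) x₀ :=
    Quotient.exact ((induced_pow_mk hGbar k x₀).symm.trans (by rw [hk]; rfl))
  have : h * G ^ k = 1 := hx₀ _ (H.mul_mem (hΓH hΓ) (H.pow_mem hGH k)) hx
  exact eq_inv_of_mul_eq_one_right this ▸ Γ.inv_mem hΓ

end OrbitSpace

theorem orderOf_lt_iff_exists_pow_eq_one {M : Type*} [Monoid M] {g : M} {m : ℕ}
    (hg : g ^ m = 1) : orderOf g < m ↔ ∃ k, 0 < k ∧ k < m ∧ g ^ k = 1 := by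
  refine ⟨fun hlt => ⟨orderOf g, ?_, hlt, pow_orderOf_eq_one g⟩,
    fun ⟨k, hk, hkm, hgk⟩ => (orderOf_le_of_pow_eq_one hk hgk).trans_lt hkm⟩
  exact orderOf_pos_iff.mpr
    (isOfFinOrder_iff_pow_eq_one.mpr ⟨m, (Nat.zero_le _).trans_lt hlt, hg⟩)

theorem pow_mem_zpowers_iff_exists_pos_pow_eq {G : Type*} [Group G] {a b : G}
    (ha : IsOfFinOrder a) {k : ℕ} (hk : 0 < k) (hkb : k < orderOf b) :
    b ^ k ∈ Subgroup.zpowers a ↔ ∃ l, 0 < l ∧ l < orderOf a ∧ a ^ l = b ^ k := by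
  refine ⟨fun h => ?_, fun ⟨l, _, _, hl⟩ => hl ▸ Subgroup.pow_mem _ (Subgroup.mem_zpowers a) l⟩
  obtain ⟨l, hl⟩ := (Submonoid.mem_powers_iff _ _).mp (ha.mem_powers_iff_mem_zpowers.mpr h)
  refine ⟨l % orderOf a, Nat.pos_of_ne_zero fun h0 => ?_, Nat.mod_lt _ ha.orderOf_pos,
    by rw [pow_mod_orderOf, hl]⟩
  exact pow_ne_one_of_lt_orderOf hk.ne' hkb (by rw [← hl, ← pow_mod_orderOf, h0, pow_zero])

theorem order_of_induced_map_lt_iff_general {X : Type*} [TopologicalSpace X]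
    (F G : X ≃ₜ X) (n m : ℕ) (hn : 1 ≤ n)
    (hF : orderOf F = n) (hG : orderOf G = m)
    (Gbar : Quotient (orbitSetoid (Subgroup.zpowers F)) ≃ₜ
        Quotient (orbitSetoid (Subgroup.zpowers F)))
    (hGbar : ∀ x : X, Gbar (Quotient.mk _ x) = Quotient.mk _ (G x))
    (x₀ : X)
    (hx₀ : ∀ h ∈ Subgroup.closure ({F, G} : Set (X ≃ₜ X)), (h : X ≃ₜ X) x₀ = x₀ → h = 1) :
    orderOf Gbar < m ↔
      ∃ k l : ℕ, 0 < k ∧ k < m ∧ 0 < l ∧ l < n ∧ F ^ l = G ^ k := by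
  have hF_fin : IsOfFinOrder F := orderOf_pos_iff.mp (hF ▸ hn)
  have hΓ : Subgroup.zpowers F ≤ Subgroup.closure {F, G} :=
    Subgroup.zpowers_le.mpr (Subgroup.subset_closure (Set.mem_insert F {G}))
  have hG_mem : G ∈ Subgroup.closure {F, G} :=
    Subgroup.subset_closure (Set.mem_insert_of_mem F rfl)
  have hGbar_m : Gbar ^ m = 1 :=
    induced_pow_eq_one_of_mem hGbar (by rw [← hG, pow_orderOf_eq_one]; exact one_mem _)
  simp only [orderOf_lt_iff_exists_pow_eq_one hGbar_m, exists_and_left]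
  refine exists_congr fun k => and_congr_right fun hk => and_congr_right fun hkm => ?_
  rw [← hF, ← pow_mem_zpowers_iff_exists_pos_pow_eq hF_fin hk (hG ▸ hkm)]
  exact ⟨mem_of_induced_pow_eq_one hGbar hΓ hG_mem hx₀, induced_pow_eq_one_of_mem hGbar⟩

/-- **Lemma 3.2 (iii).**  Let `F` and `G` be commuting homeomorphisms of a topological space
`X` of finite orders `n ≥ 1` and `m ≥ 1` respectively, let `Ḡ` be the homeomorphism of
`X/⟨F⟩` induced by `G`, and suppose some point `x₀ ∈ X` has trivial stabilizer in `⟨F,G⟩`.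
Then `|Ḡ| < m` if and only if `F^l = G^k` for some `0 < k < m` and `0 < l < n`. -/
theorem order_of_induced_map_lt_iff {X : Type*} [TopologicalSpace X]
    (F G : X ≃ₜ X) (hcomm : F * G = G * F) (n m : ℕ) (hn : 1 ≤ n) (hm : 1 ≤ m)
    (hF : orderOf F = n) (hG : orderOf G = m)
    (Gbar : Quotient (orbitSetoid (Subgroup.zpowers F)) ≃ₜ
        Quotient (orbitSetoid (Subgroup.zpowers F)))
    (hGbar : ∀ x : X, Gbar (Quotient.mk _ x) = Quotient.mk _ (G x))
    (x₀ : X)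
    (hx₀ : ∀ h ∈ Subgroup.closure ({F, G} : Set (X ≃ₜ X)), (h : X ≃ₜ X) x₀ = x₀ → h = 1) :
    orderOf Gbar < m ↔
      ∃ k l : ℕ, 0 < k ∧ k < m ∧ 0 < l ∧ l < n ∧ F ^ l = G ^ k :=
  order_of_induced_map_lt_iff_general F G n m hn hF hG Gbar hGbar x₀ hx₀
end

section
/- Let m, n ≥ 2 be integers with m dividing n, let r ≥ 1, and for each i = 1, …, r, let n_{i1} be a positive divisor of m and n_{i2} a positive divisor of n, set n_i := lcm(n_{i1}, n_{i2}), and let c_{i1}, c_{i2} be integers with gcd(c_{i1}, n_{i1}) = 1 and gcd(c_{i2}, n_{i2}) = 1. Define v_i := ((m/n_{i1})·c_{i1}, (n/n_{i2})·c_{i2}) ∈ ℤ/mℤ × ℤ/nℤ. Assume: (a) Σ_{i=1}^r (m/n_{i1})·c_{i1} ≡ 0 (mod m) and Σ_{i=1}^r (n/n_{i2})·c_{i2} ≡ 0 (mod n); and (b) there exist integers ℓ₁, …, ℓ_r and k₁, …, k_r such that Σ_{i=1}^r ℓ_i·v_i = (0, 1) and Σ_{i=1}^r k_i·v_i = (1,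 0) in ℤ/mℤ × ℤ/nℤ. Let G₀ be the group with presentation ⟨ξ₁, …, ξ_r | ξ₁^{n₁} = ⋯ = ξ_r^{n_r} = ξ₁ξ₂⋯ξ_r = 1⟩. Then there exists a surjective group homomorphism φ : G₀ → ℤ/mℤ × ℤ/nℤ such that φ(ξ_i) = v_i and the order of φ(ξ_i) equals n_i, for each i = 1, …, r. -/
/-!
Since `ℤ/mℤ × ℤ/nℤ` is abelian, `ξ_i ↦ v_i` respects the relators exactly when each `n_i • v_i`
and `∑ v_i` vanish; the first holds because `v_i` has order `lcm(n_{i1}, n_{i2}) = n_i`, its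
coordinates having orders `n_{i1}` and `n_{i2}`, and the second is condition (a). Condition (b)
puts `(1, 0)` and `(0, 1)` in the image, which is therefore everything.
-/

/-- The "long relator" `ξ₁ ξ₂ ⋯ ξ_r` in the free group on `Fin r`. -/
def longRelator (r : ℕ) : FreeGroup (Fin r) :=
  ((List.finRange r).map FreeGroup.of).prod

/-- The relators `ξ₁^{n₁}, …, ξ_r^{n_r}, ξ₁ξ₂⋯ξ_r` of the genus-zero orbifold group of
signature `(0; n₁, …, n_r)`. -/
def sphericalRelators (r : ℕ) (nn : Fin r → ℕ) : Set (FreeGroup (Fin r)) :=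
  {w | ∃ i, w = FreeGroup.of i ^ nn i} ∪ {longRelator r}

theorem IsCoprime.addOrderOf_zsmul {A : Type*} [AddGroup A] {x : A} {k : ℤ}
    (h : IsCoprime k (addOrderOf x)) : addOrderOf (k • x) = addOrderOf x := by
  obtain ⟨a, b, hab⟩ := h
  refine Nat.dvd_antisymm (addOrderOf_dvd_of_mem_zmultiples ⟨k, rfl⟩)
    (addOrderOf_dvd_of_mem_zmultiples ⟨a, ?_⟩)
  calc a • k • x = (a * k + b * addOrderOf x) • x := by
        rw [add_zsmul, mul_zsmul, mul_zsmul, natCast_zsmul, addOrderOf_nsmul_eq_zero,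
          zsmul_zero, add_zero]
    _ = x := by rw [hab, one_smul]

theorem ZMod.addOrderOf_natCast_div_mul_intCast {m d : ℕ} [NeZero m] (hd : d ∣ m) {c : ℤ}
    (hc : Int.gcd c d = 1) : addOrderOf (((m / d : ℕ) : ZMod m) * c) = d := by
  have hgen : addOrderOf ((m / d : ℕ) : ZMod m) = d := by
    rw [ZMod.addOrderOf_coe _ (NeZero.ne m), Nat.gcd_eq_right (Nat.div_dvd_of_dvd hd),
      Nat.div_div_self hd (NeZero.ne m)]
  rw [mul_comm, ← zsmul_eq_mul, IsCoprime.addOrderOf_zsmul, hgen]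
  rwa [hgen, Int.isCoprime_iff_gcd_eq_one]

theorem lift_eq_one_of_mem_sphericalRelators {G : Type*} [Group G] {r : ℕ} {nn : Fin r → ℕ}
    {f : Fin r → G} (hpow : ∀ i, f i ^ nn i = 1) (hprod : ((List.finRange r).map f).prod = 1) :
    ∀ w ∈ sphericalRelators r nn, FreeGroup.lift f w = 1 := by
  rintro w (⟨i, rfl⟩ | rfl)
  · rw [map_pow, FreeGroup.lift_apply_of, hpow]
  · rw [longRelator, map_list_prod, List.map_map]
    simpa only [Function.comp_def, FreeGroup.lift_apply_of] using hprod

theorem ZMod.addSubgroup_prod_eq_top {m n : ℕ} {H : AddSubgroup (ZMod m × ZMod n)}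
    (h₁ : ((1 : ZMod m), (0 : ZMod n)) ∈ H) (h₂ : ((0 : ZMod m), (1 : ZMod n)) ∈ H) :
    H = ⊤ := by
  refine (AddSubgroup.eq_top_iff' H).mpr fun x => ?_
  have hx : x = (x.1.cast : ℤ) • ((1 : ZMod m), (0 : ZMod n)) +
      (x.2.cast : ℤ) • ((0 : ZMod m), (1 : ZMod n)) := by
    ext <;> simp
  rw [hx]
  exact add_mem (zsmul_mem h₁ _) (zsmul_mem h₂ _)

theorem surjective_of_sum_zsmul_eq {G ι : Type*} [Group G] [Fintype ι] {m n : ℕ}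
    (φ : G →* Multiplicative (ZMod m × ZMod n)) {g : ι → G} {v : ι → ZMod m × ZMod n}
    (hφ : ∀ i, φ (g i) = Multiplicative.ofAdd (v i))
    (hb : ∃ l k : ι → ℤ,
      (∑ i, l i • v i) = ((0 : ZMod m), (1 : ZMod n)) ∧
      (∑ i, k i • v i) = ((1 : ZMod m), (0 : ZMod n))) :
    Function.Surjective φ := by
  obtain ⟨l, k, hl, hk⟩ := hb
  have hcomb : ∀ e : ι → ℤ, ∑ i, e i • v i ∈ φ.range.toAddSubgroup' :=
    fun e => sum_mem fun i _ => show Multiplicative.ofAdd (v i) ^ e i ∈ φ.range from zpow_mem (MonoidHom.mem_range.mpr ⟨g i, hφ i⟩) (e i)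
  have htop := ZMod.addSubgroup_prod_eq_top (hk ▸ hcomb k) (hl ▸ hcomb l)
  rw [← MonoidHom.range_eq_top, ← Subgroup.toAddSubgroup'.injective.eq_iff, htop]
  exact Subgroup.toAddSubgroup'.map_top

theorem exists_surjective_hom_of_abelian_data_genus_zero_general
    (m n : ℕ) (hm : 2 ≤ m) (hn : 2 ≤ n) (r : ℕ)
    (n1 n2 : Fin r → ℕ)
    (hn1 : ∀ i, n1 i ∣ m) (hn2 : ∀ i, n2 i ∣ n)
    (nn : Fin r → ℕ) (hnn : ∀ i, nn i = Nat.lcm (n1 i) (n2 i))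
    (c1 c2 : Fin r → ℤ)
    (hc1 : ∀ i, Int.gcd (c1 i) (n1 i) = 1) (hc2 : ∀ i, Int.gcd (c2 i) (n2 i) = 1)
    (v : Fin r → ZMod m × ZMod n)
    (hv : ∀ i, v i = (((m / n1 i : ℕ) : ZMod m) * (c1 i : ZMod m),
                      ((n / n2 i : ℕ) : ZMod n) * (c2 i : ZMod n)))
    (ha1 : ∑ i, ((m / n1 i : ℕ) : ZMod m) * (c1 i : ZMod m) = 0)
    (ha2 : ∑ i, ((n / n2 i : ℕ) : ZMod n) * (c2 i : ZMod n) = 0)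
    (hb : ∃ l k : Fin r → ℤ,
      (∑ i, l i • v i) = ((0 : ZMod m), (1 : ZMod n)) ∧
      (∑ i, k i • v i) = ((1 : ZMod m), (0 : ZMod n))) :
    ∃ φ : PresentedGroup (sphericalRelators r nn) →* Multiplicative (ZMod m × ZMod n),
      Function.Surjective φ ∧
      ∀ i, φ (PresentedGroup.of i) = Multiplicative.ofAdd (v i) ∧
        orderOf (φ (PresentedGroup.of i)) = nn i := by
  have : NeZero m := ⟨by omega⟩
  have : NeZero n := ⟨by omega⟩
  have hord : ∀ i, addOrderOf (v i) = nn i := fun i => by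
    rw [hv i, Prod.addOrderOf_mk, ZMod.addOrderOf_natCast_div_mul_intCast (hn1 i) (hc1 i),
      ZMod.addOrderOf_natCast_div_mul_intCast (hn2 i) (hc2 i), hnn i]
  have hsum : ∑ i, v i = 0 := by
    ext <;> simp [Prod.fst_sum, Prod.snd_sum, hv, ha1, ha2]
  have hrel := lift_eq_one_of_mem_sphericalRelators (nn := nn)
    (f := fun i => Multiplicative.ofAdd (v i))
    (fun i => by rw [← ofAdd_nsmul, ← hord i, addOrderOf_nsmul_eq_zero, ofAdd_zero])
    (by rw [← Fin.prod_univ_def, ← ofAdd_sum, hsum, ofAdd_zero])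
  refine ⟨PresentedGroup.toGroup hrel,
    surjective_of_sum_zsmul_eq _ (fun i => PresentedGroup.toGroup.of hrel) hb, fun i => ?_⟩
  rw [PresentedGroup.toGroup.of, orderOf_ofAdd_eq_addOrderOf, hord i]
  exact ⟨rfl, rfl⟩

/-- **Proposition 4.3, forward direction, genus-zero case.**  Given `2 ≤ m ∣ n`, divisors
`n_{i1} ∣ m`, `n_{i2} ∣ n`, `n_i = lcm(n_{i1}, n_{i2})`, and integers `c_{i1}, c_{i2}`
coprime to `n_{i1}, n_{i2}` respectively, set
`v_i = ((m/n_{i1})·c_{i1}, (n/n_{i2})·c_{i2}) ∈ ℤ/mℤ × ℤ/nℤ`.  If (a) both coordinate sums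
vanish, and (b) some integer combinations of the `v_i` equal `(0,1)` and `(1,0)`, then there
is a surjective homomorphism `φ` from the presented group
`⟨ξ₁, …, ξ_r ∣ ξ_i^{n_i}, ξ₁⋯ξ_r⟩` onto `ℤ/mℤ ⊕ ℤ/nℤ` with `φ(ξ_i) = v_i` of order `n_i`. -/
theorem exists_surjective_hom_of_abelian_data_genus_zero
    (m n : ℕ) (hm : 2 ≤ m) (hn : 2 ≤ n) (hmn : m ∣ n) (r : ℕ) (hr : 1 ≤ r)
    (n1 n2 : Fin r → ℕ) (hn1pos : ∀ i, 0 < n1 i) (hn2pos : ∀ i, 0 < n2 i)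
    (hn1 : ∀ i, n1 i ∣ m) (hn2 : ∀ i, n2 i ∣ n)
    (nn : Fin r → ℕ) (hnn : ∀ i, nn i = Nat.lcm (n1 i) (n2 i))
    (c1 c2 : Fin r → ℤ)
    (hc1 : ∀ i, Int.gcd (c1 i) (n1 i) = 1) (hc2 : ∀ i, Int.gcd (c2 i) (n2 i) = 1)
    (v : Fin r → ZMod m × ZMod n)
    (hv : ∀ i, v i = (((m / n1 i : ℕ) : ZMod m) * (c1 i : ZMod m),
                      ((n / n2 i : ℕ) : ZMod n) * (c2 i : ZMod n)))
    (ha1 : ∑ i, ((m / n1 i : ℕ) : ZMod m) * (c1 i : ZMod m) = 0)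
    (ha2 : ∑ i, ((n / n2 i : ℕ) : ZMod n) * (c2 i : ZMod n) = 0)
    (hb : ∃ l k : Fin r → ℤ,
      (∑ i, l i • v i) = ((0 : ZMod m), (1 : ZMod n)) ∧
      (∑ i, k i • v i) = ((1 : ZMod m), (0 : ZMod n))) :
    ∃ φ : PresentedGroup (sphericalRelators r nn) →* Multiplicative (ZMod m × ZMod n),
      Function.Surjective φ ∧
      ∀ i, φ (PresentedGroup.of i) = Multiplicative.ofAdd (v i) ∧
        orderOf (φ (PresentedGroup.of i)) = nn i :=
  exists_surjective_hom_of_abelian_data_genus_zero_general m n hm hn r n1 n2 hn1 hn2 nn hnn c1 c2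
    hc1 hc2 v hv ha1 ha2 hb
end

section
/- Let m, n ≥ 2 be integers with m dividing n, let n₁, …, n_r be integers ≥ 1, and let G₀ be the group with presentation ⟨ξ₁, …, ξ_r | ξ₁^{n₁} = ⋯ = ξ_r^{n_r} = ξ₁ξ₂⋯ξ_r = 1⟩. Suppose ψ : G₀ → ℤ/mℤ × ℤ/nℤ is a surjective group homomorphism such that the order of ψ(ξ_i) equals n_i for each i. Then for each i = 1, …, r there exist a positive divisor n_{i1} of m, a positive divisor n_{i2} of n, and integers c_{i1}, c_{i2} with gcd(c_{i1}, n_{i1}) = 1, gcd(c_{i2}, n_{i2}) = 1 and lcm(n_{i1}, n_{i2}) = n_i, such that ψ(ξ_i) = ((m/n_{i1})·c_{i1}, (n/n_{i2})·c_{i2}); moreover Σ_{i=1}^r (m/n_{i1})·c_{i1} ≡ 0 (mod m), Σ_{i=1}^r (n/n_{i2})·c_{i2} ≡ 0 (mod n), and there exist integers ℓ₁, …, ℓ_r and k₁, …, k_r with Σ_{i=1}^r ℓ_i·ψ(ξ_i) = (0, 1) and Σ_{i=1}^r k_i·ψ(ξ_i) = (1, 0) in ℤ/mℤ × ℤ/nℤ.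 -/
theorem ZMod.exists_eq_natCast_div_addOrderOf_mul {N : ℕ} [NeZero N] (x : ZMod N) :
    ∃ c : ℤ, Int.gcd c (addOrderOf x) = 1 ∧
      x = ((N / addOrderOf x : ℕ) : ZMod N) * (c : ZMod N) := by
  have hgcd_dvd : N.gcd x.val ∣ x.val := Nat.gcd_dvd_right _ _
  have hord : addOrderOf x = N / N.gcd x.val := by
    rw [← ZMod.addOrderOf_coe _ (NeZero.ne N), ZMod.natCast_zmod_val]
  refine ⟨(x.val / N.gcd x.val : ℕ), ?_, ?_⟩
  · rw [hord, Int.gcd_natCast_natCast]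
    exact (Nat.coprime_div_gcd_div_gcd (Nat.gcd_pos_of_pos_left _ (NeZero.pos N))).symm
  · rw [hord, Nat.div_div_self (Nat.gcd_dvd_left _ _) (NeZero.ne N), Int.cast_natCast,
      ← Nat.cast_mul, Nat.mul_div_cancel' hgcd_dvd, ZMod.natCast_zmod_val]

namespace PresentedGroup

variable {G : Type*}

theorem prod_of_eq_one_of_longRelator_mem [CommMonoid G] {r : ℕ}
    {rels : Set (FreeGroup (Fin r))} (h : longRelator r ∈ rels) (ψ : PresentedGroup rels →* G) :
    ∏ i, ψ (of i) = 1 := by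
  have := congrArg ψ (one_of_mem h)
  rwa [map_one, longRelator, map_list_prod, map_list_prod, List.map_map, List.map_map,
    ← Fin.prod_univ_def] at this

theorem exists_eq_prod_zpow_of_surjective {α : Type*} [Fintype α] [CommGroup G]
    {rels : Set (FreeGroup α)} {ψ : PresentedGroup rels →* G} (hψ : Function.Surjective ψ)
    (x : G) :
    ∃ a : α → ℤ, x = ∏ i, ψ (of i) ^ a i := by
  rw [← Subgroup.mem_closure_range_iff_of_fintype, Set.range_comp' ψ, ← MonoidHom.map_closure,
    closure_range_of, ← MonoidHom.range_eq_map, MonoidHom.range_eq_top.2 hψ]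
  exact Subgroup.mem_top x

end PresentedGroup

theorem abelian_data_of_surjective_hom_general
    (m n : ℕ) (hm : 2 ≤ m) (hn : 2 ≤ n) (r : ℕ)
    (nn : Fin r → ℕ)
    (ψ : PresentedGroup (sphericalRelators r nn) →* Multiplicative (ZMod m × ZMod n))
    (hsurj : Function.Surjective ψ)
    (hord : ∀ i, orderOf (ψ (PresentedGroup.of i)) = nn i) :
    ∃ (n1 n2 : Fin r → ℕ) (c1 c2 : Fin r → ℤ),
      (∀ i, 0 < n1 i ∧ n1 i ∣ m ∧ 0 < n2 i ∧ n2 i ∣ n ∧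
        Int.gcd (c1 i) (n1 i) = 1 ∧ Int.gcd (c2 i) (n2 i) = 1 ∧
        Nat.lcm (n1 i) (n2 i) = nn i ∧
        Multiplicative.toAdd (ψ (PresentedGroup.of i)) =
          (((m / n1 i : ℕ) : ZMod m) * (c1 i : ZMod m),
           ((n / n2 i : ℕ) : ZMod n) * (c2 i : ZMod n))) ∧
      (∑ i, ((m / n1 i : ℕ) : ZMod m) * (c1 i : ZMod m)) = 0 ∧
      (∑ i, ((n / n2 i : ℕ) : ZMod n) * (c2 i : ZMod n)) = 0 ∧
      ∃ l k : Fin r → ℤ,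
        (∑ i, l i • Multiplicative.toAdd (ψ (PresentedGroup.of i))) =
          ((0 : ZMod m), (1 : ZMod n)) ∧
        (∑ i, k i • Multiplicative.toAdd (ψ (PresentedGroup.of i))) =
          ((1 : ZMod m), (0 : ZMod n)) := by
  have : NeZero m := ⟨by omega⟩
  have : NeZero n := ⟨by omega⟩
  set a : Fin r → ZMod m × ZMod n := fun i => Multiplicative.toAdd (ψ (PresentedGroup.of i))
  choose c1 hc1 ha1 using fun i => ZMod.exists_eq_natCast_div_addOrderOf_mul (a i).1
  choose c2 hc2 ha2 using fun i => ZMod.exists_eq_natCast_div_addOrderOf_mul (a i).2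
  have hsum : ∑ i, a i = 0 := by
    simpa only [toAdd_prod, toAdd_one] using congrArg Multiplicative.toAdd
      (PresentedGroup.prod_of_eq_one_of_longRelator_mem (Or.inr rfl) ψ)
  have hspan (x : ZMod m × ZMod n) : ∃ l : Fin r → ℤ, ∑ i, l i • a i = x := by
    obtain ⟨l, hl⟩ := PresentedGroup.exists_eq_prod_zpow_of_surjective hsurj
      (Multiplicative.ofAdd x)
    refine ⟨l, ?_⟩
    simpa only [toAdd_prod, toAdd_zpow, toAdd_ofAdd] using (congrArg Multiplicative.toAdd hl).symm
  obtain ⟨l, hl⟩ := hspan (0, 1)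
  obtain ⟨k, hk⟩ := hspan (1, 0)
  refine ⟨fun i => addOrderOf (a i).1, fun i => addOrderOf (a i).2, c1, c2, fun i => ?_,
    ?_, ?_, l, k, hl, hk⟩
  · refine ⟨addOrderOf_pos _, addOrderOf_dvd_of_nsmul_eq_zero (by simp), addOrderOf_pos _,
      addOrderOf_dvd_of_nsmul_eq_zero (by simp), hc1 i, hc2 i, ?_, Prod.ext (ha1 i) (ha2 i)⟩
    rw [← Prod.addOrderOf]
    exact hord i
  · simpa only [← ha1, Prod.fst_sum, Prod.fst_zero] using congrArg Prod.fst hsum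
  · simpa only [← ha2, Prod.snd_sum, Prod.snd_zero] using congrArg Prod.snd hsum

/-- **Proposition 4.3, converse direction.**  Let `2 ≤ m ∣ n`, and let
`ψ : ⟨ξ₁, …, ξ_r ∣ ξ_i^{n_i}, ξ₁⋯ξ_r⟩ → ℤ/mℤ ⊕ ℤ/nℤ` be a surjective homomorphism with
`ord(ψ(ξ_i)) = n_i` for each `i`.  Then for each `i` there are positive divisors
`n_{i1} ∣ m`, `n_{i2} ∣ n` and integers `c_{i1}, c_{i2}` coprime to them, with
`lcm(n_{i1}, n_{i2}) = n_i` and `ψ(ξ_i) = ((m/n_{i1})·c_{i1}, (n/n_{i2})·c_{i2})`;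
moreover both coordinate sums vanish, and some integer combinations of the `ψ(ξ_i)`
equal `(0,1)` and `(1,0)`. -/
theorem abelian_data_of_surjective_hom
    (m n : ℕ) (hm : 2 ≤ m) (hn : 2 ≤ n) (hmn : m ∣ n) (r : ℕ)
    (nn : Fin r → ℕ) (hnn : ∀ i, 1 ≤ nn i)
    (ψ : PresentedGroup (sphericalRelators r nn) →* Multiplicative (ZMod m × ZMod n))
    (hsurj : Function.Surjective ψ)
    (hord : ∀ i, orderOf (ψ (PresentedGroup.of i)) = nn i) :
    ∃ (n1 n2 : Fin r → ℕ) (c1 c2 : Fin r → ℤ),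
      (∀ i, 0 < n1 i ∧ n1 i ∣ m ∧ 0 < n2 i ∧ n2 i ∣ n ∧
        Int.gcd (c1 i) (n1 i) = 1 ∧ Int.gcd (c2 i) (n2 i) = 1 ∧
        Nat.lcm (n1 i) (n2 i) = nn i ∧
        Multiplicative.toAdd (ψ (PresentedGroup.of i)) =
          (((m / n1 i : ℕ) : ZMod m) * (c1 i : ZMod m),
           ((n / n2 i : ℕ) : ZMod n) * (c2 i : ZMod n))) ∧
      (∑ i, ((m / n1 i : ℕ) : ZMod m) * (c1 i : ZMod m)) = 0 ∧
      (∑ i, ((n / n2 i : ℕ) : ZMod n) * (c2 i : ZMod n)) = 0 ∧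
      ∃ l k : Fin r → ℤ,
        (∑ i, l i • Multiplicative.toAdd (ψ (PresentedGroup.of i))) =
          ((0 : ZMod m), (1 : ZMod n)) ∧
        (∑ i, k i • Multiplicative.toAdd (ψ (PresentedGroup.of i))) =
          ((1 : ZMod m), (0 : ZMod n)) :=
  abelian_data_of_surjective_hom_general m n hm hn r nn ψ hsurj hord
end
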